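/- Let p be a prime with p ≡ 1 (mod 4), let α be a primitive element of F_p^*, and let θ be the quartic character of F_p with θ(α) = i. Let f, g, h be character combination sequences with prime p whose character combinations are, respectively: f_θ = (1−i)/2, f_{θ̄} = (1+i)/2, and f_χ = 0 otherwise; g_θ = (1+i)/2, g_{θ̄} = (1−i)/2, and g_χ = 0 otherwise; h_η = 1 and h_χ = 0 otherwise, where η = θ² is the quadratic character. Then: S_{f,f} = S_{g,g} = (−3 − Re(τ(θ)⁴/p²))/2; S_{h,h} = −2; S_{f,g} = (−1 + Re(τ(θ)⁴/p²))/2; S_{f,h} = S_{g,h} = 0; U_{f,f} = U_{g,g} = U_{h,h} = V_{f,f} = V_{g,g} = V_{h,h} = 1; U_{f,g} = V_{f,g} = U_{f,h} = U_{g,h} = V_{f,h} = V_{g,h} = 0; W_f = W_g = √2; and W_h = 1. -/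

import Mathlib

open scoped BigOperators Classical ComplexOrder

noncomputable section

namespace Paper

/-- `Ω(x,y) = Σ_{n ∈ ℤ} max(0, 1 − |n·x − y|)²`. -/
def Omega (x y : ℝ) : ℝ := ∑' n : ℤ, max 0 (1 - |(n : ℝ) * x - y|) ^ 2

/-- The extension of a finite sequence of length `ℓ` by zero to all of `ℤ`. -/
def ext (ℓ : ℕ) (f : ℕ → ℂ) (j : ℤ) : ℂ :=
  if 0 ≤ j ∧ j < (ℓ : ℤ) then f j.toNat else 0

/-- Aperiodic crosscorrelation `C_{f,g}(s)` of two sequences of length `ℓ` at shift `s`. -/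
def XC (ℓ : ℕ) (f g : ℕ → ℂ) (s : ℤ) : ℂ :=
  ∑' j : ℤ, ext ℓ f j * (starRingEnd ℂ) (ext ℓ g (j + s))

/-- Crosscorrelation demerit factor `CDF(f,g)`. -/
def CDF (ℓ : ℕ) (f g : ℕ → ℂ) : ℝ :=
  (∑' s : ℤ, ‖(XC ℓ f g s)‖ ^ 2) /
    (‖(XC ℓ f f 0)‖ * ‖(XC ℓ g g 0)‖)

/-- Autocorrelation demerit factor `DF(f) = CDF(f,f) − 1`. -/
def DF (ℓ : ℕ) (f : ℕ → ℂ) : ℝ := CDF ℓ f f - 1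

/-- `u` is a unimodularization of the length-`ℓ` sequence `f`: it agrees with `f` at
nonzero terms and replaces each zero term by a complex number of modulus `1`. -/
def IsUnimodularization (ℓ : ℕ) (f u : ℕ → ℂ) : Prop :=
  ∀ j < ℓ, (f j ≠ 0 → u j = f j) ∧ (f j = 0 → ‖(u j)‖ = 1)

/-- The multiplicative characters of `F_p = ZMod p`, extended by `χ(0) = 0`. -/
abbrev MChar (p : ℕ) := MulChar (ZMod p) ℂ

instance (p : ℕ) [Fact p.Prime] : Fintype (MChar p) := Fintype.ofFinite _

/-- The Gauss sum `τ(χ) = Σ_{x ∈ F_p} e^{2πi x / p} χ(x)` (note `χ(0) = 0`). -/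
def gauss (p : ℕ) [Fact p.Prime] (χ : MChar p) : ℂ :=
  ∑ x : ZMod p, Complex.exp (2 * Real.pi * Complex.I * (x.val : ℂ) / (p : ℂ)) * χ x

/-- The quadratic character `η` of `F_p`, with values in `ℂ`. -/
def quadChar (p : ℕ) [Fact p.Prime] : MChar p :=
  (quadraticChar (ZMod p)).ringHomComp (Int.castRingHom ℂ)

/-- `c` is a character combination: the coefficient of the trivial character vanishes and
the sum of the squared magnitudes of the coefficients is `1`. -/
def IsCharCombo (p : ℕ) [Fact p.Prime] (c : MChar p → ℂ) : Prop :=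
  c 1 = 0 ∧ ∑ χ : MChar p, ‖(c χ)‖ ^ 2 = 1

/-- The function `F(a) = Σ_χ f_χ · χ(a)` attached to a character combination. -/
def combFun (p : ℕ) [Fact p.Prime] (c : MChar p → ℂ) (a : ZMod p) : ℂ :=
  ∑ χ : MChar p, c χ * χ a

/-- The character combination sequence with shift `s`: its `j`-th term is `F(s + j)`. -/
def combSeq (p : ℕ) [Fact p.Prime] (c : MChar p → ℂ) (s : ℤ) : ℕ → ℂ :=
  fun j => combFun p c (((s + (j : ℤ)) : ℤ) : ZMod p)

/-- A character combination is unimodularizable when `|F(a)| = 1` for all `a ≠ 0`. -/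
def Unimodularizable (p : ℕ) [Fact p.Prime] (c : MChar p → ℂ) : Prop :=
  ∀ a : ZMod p, a ≠ 0 → ‖(combFun p c a)‖ = 1

/-- The parameter `S_{f,g}` of a pair of character combination sequences. -/
def Sparam (p : ℕ) [Fact p.Prime] (c d : MChar p → ℂ) : ℂ :=
  (∑ φ : MChar p, ∑ χ : MChar p, ∑ ψ : MChar p, ∑ ω : MChar p,
      if φ * χ = ψ * ω ∧ φ ≠ χ⁻¹ ∧ φ ≠ ψ ∧ φ ≠ ω then
        c φ * d χ * (starRingEnd ℂ) (c ψ * d ω) *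
          (gauss p φ * gauss p χ * (starRingEnd ℂ) (gauss p ψ * gauss p ω)) / (p : ℂ) ^ 2
      else 0)
    - ((∑ φ : MChar p, ‖(c φ * d φ)‖ ^ 2 : ℝ) : ℂ)
    - ((∑ φ : MChar p, ‖(c φ * d φ⁻¹)‖ ^ 2 : ℝ) : ℂ)
    - ∑ φ : MChar p, c φ * (starRingEnd ℂ) (c φ⁻¹) * d φ⁻¹ * (starRingEnd ℂ) (d φ)
    + ((‖(c (quadChar p) * d (quadChar p))‖ ^ 2 : ℝ) : ℂ)

/-- The parameter `S_{f,f}` of a single character combination sequence. -/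
def SparamAuto (p : ℕ) [Fact p.Prime] (c : MChar p → ℂ) : ℂ :=
  (∑ φ : MChar p, ∑ χ : MChar p, ∑ ψ : MChar p, ∑ ω : MChar p,
      if φ * χ = ψ * ω ∧ φ ≠ χ⁻¹ ∧ φ ≠ ψ ∧ φ ≠ ω then
        c φ * c χ * (starRingEnd ℂ) (c ψ * c ω) *
          (gauss p φ * gauss p χ * (starRingEnd ℂ) (gauss p ψ * gauss p ω)) / (p : ℂ) ^ 2
      else 0)
    - 2 * ((∑ φ : MChar p, ‖(c φ * c φ⁻¹)‖ ^ 2 : ℝ) : ℂ)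
    - ((∑ φ : MChar p, ‖(c φ)‖ ^ 4 : ℝ) : ℂ)
    + ((‖(c (quadChar p))‖ ^ 4 : ℝ) : ℂ)

/-- The parameter `U_{f,g}`. -/
def Uparam (p : ℕ) [Fact p.Prime] (c d : MChar p → ℂ) : ℝ :=
  ‖(∑ φ : MChar p, c φ * (starRingEnd ℂ) (d φ))‖ ^ 2

/-- The parameter `V_{f,g}`. -/
def Vparam (p : ℕ) [Fact p.Prime] (c d : MChar p → ℂ) : ℝ :=
  ‖(∑ φ : MChar p, c φ * d φ⁻¹ * φ (-1))‖ ^ 2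

/-- The parameter `W_f`. -/
def Wparam (p : ℕ) [Fact p.Prime] (c : MChar p → ℂ) : ℝ :=
  ∑ φ : MChar p, ‖(c φ)‖

/-- Periodic crosscorrelation of two periodic sequences of period `n` at shift `s`. -/
def PC (n : ℕ) [NeZero n] (u v : ZMod n → ℂ) (s : ZMod n) : ℂ :=
  ∑ j : ZMod n, u j * (starRingEnd ℂ) (v (j + s))

/-- Fourier transform `û_a = Σ_x u_x e^{2πi a x / n}` of a periodic sequence of period `n`. -/
def FT (n : ℕ) [NeZero n] (u : ZMod n → ℂ) (a : ZMod n) : ℂ :=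
  ∑ x : ZMod n, u x * Complex.exp (2 * Real.pi * Complex.I * ((a.val : ℂ) * (x.val : ℂ)) / (n : ℂ))

/-- `α` is a primitive element of `F_p`, i.e. a generator of the unit group. -/
def IsPrimitive (p : ℕ) (α : (ZMod p)ˣ) : Prop :=
  ∀ x : (ZMod p)ˣ, x ∈ Subgroup.zpowers α

/-- The subgroup `F_p^{*2m}` of `2m`-th powers in the unit group of `F_p`. -/
def powSubgroup (p m : ℕ) : Subgroup (ZMod p)ˣ :=
  (powMonoidHom (2 * m) : (ZMod p)ˣ →* (ZMod p)ˣ).range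

/-- The quotient group `F_p^* / F_p^{*2m}` of `2m`-th power residue classes. -/
abbrev ResCosets (p m : ℕ) := (ZMod p)ˣ ⧸ powSubgroup p m

/-- The function `F_{p,𝒜}`: `0` at `0`, `+1` on the union of the cosets in `𝒜`,
`−1` on the remaining nonzero elements. -/
def resFun (p m : ℕ) (A : Finset (ResCosets p m)) (j : ZMod p) : ℂ :=
  if h : IsUnit j then (if (QuotientGroup.mk h.unit : ResCosets p m) ∈ A then 1 else -1) else 0

/-- The sequence of a `2m`-th residue class construction, with shift `s`. -/
def resSeq (p m : ℕ) (A : Finset (ResCosets p m)) (s : ℤ) : ℕ → ℂ :=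
  fun j => resFun p m A (((s + (j : ℤ)) : ℤ) : ZMod p)

/-- The character combination coefficients of a `2m`-th residue class sequence:
`f_χ = (1/m) Σ_{A ∈ 𝒜} χ̄(A)` for nontrivial `χ` in the subgroup `Θ_p` of order `2m`
(characterized by `χ^{2m} = 1`), and `f_χ = 0` otherwise; `χ̄(A)` is evaluated at a
representative of the coset `A`, on which `χ̄` is constant. -/
def resCoef (p m : ℕ) [Fact p.Prime] (A : Finset (ResCosets p m)) (χ : MChar p) : ℂ :=
  if χ ≠ 1 ∧ χ ^ (2 * m) = 1 then
    (1 / (m : ℂ)) * ∑ B ∈ A, χ⁻¹ ((B.out : (ZMod p)ˣ) : ZMod p)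
  else 0

/-- The image of the coset `B` under multiplication by `−1`. -/
def negCoset (p m : ℕ) (B : ResCosets p m) : ResCosets p m :=
  QuotientGroup.mk ((-1 : (ZMod p)ˣ) * B.out)

/-- The quadratic residue function `H̃_p`: `+1` on `F_p^{*2}`, `−1` on `α F_p^{*2}`,
and `0` at `0`. -/
def Htilde (p : ℕ) (α : (ZMod p)ˣ) (x : ZMod p) : ℂ :=
  if ∃ y : (ZMod p)ˣ, x = ((y ^ 2 : (ZMod p)ˣ) : ZMod p) then 1
  else if ∃ y : (ZMod p)ˣ, x = ((α * y ^ 2 : (ZMod p)ˣ) : ZMod p) then -1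
  else 0

/-- The quartic residue function `F̃_p`: `+1` on `F_p^{*4} ∪ αF_p^{*4}`,
`−1` on `α²F_p^{*4} ∪ α³F_p^{*4}`, and `0` at `0`. -/
def Ftilde (p : ℕ) (α : (ZMod p)ˣ) (x : ZMod p) : ℂ :=
  if (∃ y : (ZMod p)ˣ, x = ((y ^ 4 : (ZMod p)ˣ) : ZMod p)) ∨
      (∃ y : (ZMod p)ˣ, x = ((α * y ^ 4 : (ZMod p)ˣ) : ZMod p)) then 1
  else if (∃ y : (ZMod p)ˣ, x = ((α ^ 2 * y ^ 4 : (ZMod p)ˣ) : ZMod p)) ∨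
      (∃ y : (ZMod p)ˣ, x = ((α ^ 3 * y ^ 4 : (ZMod p)ˣ) : ZMod p)) then -1
  else 0

/-- The quartic residue function `G̃_p`: `+1` on `F_p^{*4} ∪ α³F_p^{*4}`,
`−1` on `αF_p^{*4} ∪ α²F_p^{*4}`, and `0` at `0`. -/
def Gtilde (p : ℕ) (α : (ZMod p)ˣ) (x : ZMod p) : ℂ :=
  if (∃ y : (ZMod p)ˣ, x = ((y ^ 4 : (ZMod p)ˣ) : ZMod p)) ∨
      (∃ y : (ZMod p)ˣ, x = ((α ^ 3 * y ^ 4 : (ZMod p)ˣ) : ZMod p)) then 1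
  else if (∃ y : (ZMod p)ˣ, x = ((α * y ^ 4 : (ZMod p)ˣ) : ZMod p)) ∨
      (∃ y : (ZMod p)ˣ, x = ((α ^ 2 * y ^ 4 : (ZMod p)ˣ) : ZMod p)) then -1
  else 0

/-- The quadratic residue sequence `h̃_p^{s,ℓ}` (as a function; the length is used
in the correlation functionals). -/
def hSeq (p : ℕ) (α : (ZMod p)ˣ) (s : ℤ) : ℕ → ℂ :=
  fun j => Htilde p α (((s + (j : ℤ)) : ℤ) : ZMod p)

/-- The quartic residue sequence `f̃_p^{s,ℓ}`. -/
def fSeq (p : ℕ) (α : (ZMod p)ˣ) (s : ℤ) : ℕ → ℂ :=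
  fun j => Ftilde p α (((s + (j : ℤ)) : ℤ) : ZMod p)

/-- The quartic residue sequence `g̃_p^{s,ℓ}`. -/
def gSeq (p : ℕ) (α : (ZMod p)ˣ) (s : ℤ) : ℕ → ℂ :=
  fun j => Gtilde p α (((s + (j : ℤ)) : ℤ) : ZMod p)

/-! Since `α` generates `F_p^*` and `θ(α) = i`, the character `θ` has order `4` and `θ² = η`: both
send `α` to `-1`. The combinations `f`, `g` are supported on `{θ, θ̄}` and `h` on `{η}`, so every
parameter collapses to a handful of terms. In the quadruple sum of `S_{f,g}` only `(θ, θ, θ̄, θ̄)`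
and `(θ̄, θ̄, θ, θ)` survive; they are complex conjugates of each other, and
`conj τ(θ̄) = θ(-1) τ(θ)` with `θ(-1) = ±1` turns their sum into
`2 Re(f_θ g_θ conj(f_θ̄ g_θ̄) τ(θ)⁴ / p²)`. -/

open scoped ComplexConjugate

section NegOne

variable {R : Type*} [CommRing R] (χ : MulChar R ℂ)

lemma apply_neg_one_mul_self : χ (-1) * χ (-1) = 1 := by
  rw [← map_mul, neg_one_mul, neg_neg, map_one]

lemma inv_apply_neg_one : χ⁻¹ (-1) = χ (-1) := by
  rw [MulChar.inv_apply_eq_inv']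
  exact inv_eq_of_mul_eq_one_right (apply_neg_one_mul_self χ)

lemma norm_apply_neg_one : ‖χ (-1)‖ = 1 :=
  Complex.norm_eq_one_of_pow_eq_one ((sq _).trans (apply_neg_one_mul_self χ)) two_ne_zero

end NegOne

section Characters

variable {p : ℕ} [Fact p.Prime]

lemma gauss_eq_gaussSum (χ : MChar p) : gauss p χ = gaussSum χ ZMod.stdAddChar := by
  simp only [gauss, gaussSum, ZMod.stdAddChar_apply, ZMod.toCircle_apply, mul_comm]

lemma conj_gauss (χ : MChar p) : conj (gauss p χ) = χ (-1) * gauss p χ⁻¹ := by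
  have h := gaussSum_mulShift_eq χ⁻¹ ZMod.stdAddChar (-1)
  rw [Units.val_neg, Units.val_one, inv_inv, ← AddChar.inv_mulShift] at h
  rw [gauss_eq_gaussSum, gauss_eq_gaussSum, starRingEnd_apply, star_gaussSum_eq, h]

lemma conj_gauss_inv_sq (χ : MChar p) : conj (gauss p χ⁻¹) ^ 2 = gauss p χ ^ 2 := by
  rw [conj_gauss, inv_inv, mul_pow, sq (χ⁻¹ (-1)), apply_neg_one_mul_self, one_mul]

lemma gauss_inv_sq (χ : MChar p) : gauss p χ⁻¹ ^ 2 = conj (gauss p χ) ^ 2 := by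
  rw [← conj_gauss_inv_sq χ⁻¹, inv_inv]

lemma quadChar_inv : (quadChar p)⁻¹ = quadChar p :=
  ((quadraticChar_isQuadratic (ZMod p)).comp _).inv

lemma quadChar_ne_one (hp : p ≠ 2) : quadChar p ≠ 1 := by
  intro h
  apply quadraticChar_ne_one (F := ZMod p) (by rwa [ZMod.ringChar_zmod_n])
  ext a
  simpa [quadChar] using congrArg (fun χ : MChar p => χ a) h

lemma quadChar_apply_of_isPrimitive (hp : p ≠ 2) {α : (ZMod p)ˣ} (hα : IsPrimitive p α) :
    quadChar p α = -1 := by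
  have hα1 : quadChar p α ≠ 1 := fun h =>
    quadChar_ne_one hp ((MulChar.eq_iff hα _ 1).mpr (by rw [h, MulChar.one_apply_coe]))
  rcases quadraticChar_dichotomy α.ne_zero with h | h <;> simp_all [quadChar]

end Characters

section Quartic

variable {p : ℕ} [Fact p.Prime] {θ : MChar p}

lemma inv_ne_self_of_sq_eq_quadChar (hp : p ≠ 2) (hθ : θ ^ 2 = quadChar p) : θ⁻¹ ≠ θ := by
  intro h
  apply quadChar_ne_one hp
  rw [← hθ, sq]
  nth_rw 1 [← h]
  exact inv_mul_cancel θ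

lemma quadChar_ne_of_sq_eq_quadChar (hp : p ≠ 2) (hθ : θ ^ 2 = quadChar p) :
    quadChar p ≠ θ := by
  intro h
  rw [← h, sq, mul_eq_left] at hθ
  exact quadChar_ne_one hp hθ

lemma quadChar_ne_inv_of_sq_eq_quadChar (hp : p ≠ 2) (hθ : θ ^ 2 = quadChar p) :
    quadChar p ≠ θ⁻¹ := fun h =>
  quadChar_ne_of_sq_eq_quadChar hp hθ (by rw [← quadChar_inv, h, inv_inv])

lemma mul_self_eq_inv_mul_inv_of_sq_eq_quadChar (hθ : θ ^ 2 = quadChar p) :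
    θ * θ = θ⁻¹ * θ⁻¹ := by
  rw [← mul_inv, ← sq, hθ, quadChar_inv]

lemma sq_eq_quadChar_of_apply_eq_I (hp : p ≠ 2) {α : (ZMod p)ˣ} (hα : IsPrimitive p α)
    (hθ : θ α = Complex.I) : θ ^ 2 = quadChar p := by
  rw [MulChar.eq_iff hα, MulChar.pow_apply_coe, hθ, Complex.I_sq,
    quadChar_apply_of_isPrimitive hp hα]

end Quartic

section Combinations

variable {p : ℕ} [Fact p.Prime] {θ : MChar p}

def pairCombo (θ : MChar p) (a b : ℂ) : MChar p → ℂ :=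
  fun χ => if χ = θ then a else if χ = θ⁻¹ then b else 0

def singleCombo (η : MChar p) : MChar p → ℂ :=
  fun χ => if χ = η then 1 else 0

@[simp] lemma pairCombo_apply_self (a b : ℂ) : pairCombo θ a b θ = a := if_pos rfl

lemma pairCombo_apply_inv (hθ : θ⁻¹ ≠ θ) (a b : ℂ) : pairCombo θ a b θ⁻¹ = b := by
  simp [pairCombo, hθ]

lemma pairCombo_apply_of_ne {χ : MChar p} (h : χ ≠ θ) (h' : χ ≠ θ⁻¹) (a b : ℂ) :
    pairCombo θ a b χ = 0 := by
  simp [pairCombo, h, h']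

@[simp] lemma singleCombo_apply_self (η : MChar p) : singleCombo η η = 1 := if_pos rfl

lemma singleCombo_apply_of_ne {η χ : MChar p} (h : χ ≠ η) : singleCombo η χ = 0 := if_neg h

-- separates the four sums in the first term of `Sparam`
lemma ite_mul_conj_mul {P : Prop} [Decidable P] (x y z w t : ℂ) :
    (if P then x * y * conj (z * w) * t else 0) =
      x * (y * (conj z * (conj w * if P then t else 0))) := by
  split_ifs <;> simp only [map_mul, mul_zero]; ring

lemma sum_pairCombo_mul (hθ : θ⁻¹ ≠ θ) (a b : ℂ) (G : MChar p → ℂ) :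
    ∑ χ, pairCombo θ a b χ * G χ = a * G θ + b * G θ⁻¹ := by
  rw [Fintype.sum_eq_add θ θ⁻¹ hθ.symm fun χ h => by rw [pairCombo_apply_of_ne h.1 h.2, zero_mul],
    pairCombo_apply_self, pairCombo_apply_inv hθ]

lemma sum_conj_pairCombo_mul (hθ : θ⁻¹ ≠ θ) (a b : ℂ) (G : MChar p → ℂ) :
    ∑ χ, conj (pairCombo θ a b χ) * G χ = conj a * G θ + conj b * G θ⁻¹ := by
  rw [Fintype.sum_eq_add θ θ⁻¹ hθ.symm fun χ h => by
      rw [pairCombo_apply_of_ne h.1 h.2, map_zero, zero_mul],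
    pairCombo_apply_self, pairCombo_apply_inv hθ]

lemma Sparam_pairCombo (hp : p ≠ 2) (hθ2 : θ ^ 2 = quadChar p) (a b c d : ℂ) :
    Sparam p (pairCombo θ a b) (pairCombo θ c d) =
      ((2 * (a * c * conj (b * d) * (gauss p θ ^ 4 / (p : ℂ) ^ 2)).re
        - (‖a * c‖ ^ 2 + ‖b * d‖ ^ 2) - (‖a * d‖ ^ 2 + ‖b * c‖ ^ 2)
        - 2 * (a * conj b * d * conj c).re : ℝ) : ℂ) := by
  have hθ := inv_ne_self_of_sq_eq_quadChar hp hθ2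
  have hη := pairCombo_apply_of_ne (quadChar_ne_of_sq_eq_quadChar hp hθ2)
    (quadChar_ne_inv_of_sq_eq_quadChar hp hθ2) a b
  rw [Sparam]
  simp only [mul_div_assoc, ite_mul_conj_mul, ← Finset.mul_sum, sum_pairCombo_mul hθ,
    sum_conj_pairCombo_mul hθ]
  -- only the quadruples `(θ, θ, θ⁻¹, θ⁻¹)` and `(θ⁻¹, θ⁻¹, θ, θ)` survive
  simp only [hθ, hθ.symm, mul_self_eq_inv_mul_inv_of_sq_eq_quadChar hθ2, inv_inv, ne_eq,
    not_true, not_false_eq_true, and_false, and_true, if_false, if_true, mul_zero, add_zero,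
    zero_add]
  rw [Fintype.sum_eq_add θ θ⁻¹ hθ.symm, Fintype.sum_eq_add θ θ⁻¹ hθ.symm,
    Fintype.sum_eq_add θ θ⁻¹ hθ.symm]
  · simp only [inv_inv, pairCombo_apply_self, pairCombo_apply_inv hθ, hη, zero_mul, norm_zero,
      Complex.ofReal_sub, ← Complex.add_conj, map_mul, map_div₀, map_pow, map_natCast,
      Complex.conj_conj]
    push_cast
    linear_combination (a * c * conj b * conj d * gauss p θ ^ 2 / (p : ℂ) ^ 2) * conj_gauss_inv_sq θ
      + (b * d * conj a * conj c * conj (gauss p θ) ^ 2 / (p : ℂ) ^ 2) * gauss_inv_sq θ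
  all_goals rintro χ ⟨h, h'⟩; simp [pairCombo_apply_of_ne h h']

lemma sum_singleCombo_mul (η : MChar p) (G : MChar p → ℂ) : ∑ χ, singleCombo η χ * G χ = G η := by
  simp [singleCombo]

lemma sum_conj_singleCombo_mul (η : MChar p) (G : MChar p → ℂ) :
    ∑ χ, conj (singleCombo η χ) * G χ = G η := by
  simp [singleCombo, apply_ite conj]

lemma Sparam_singleCombo_quadChar :
    Sparam p (singleCombo (quadChar p)) (singleCombo (quadChar p)) = -2 := by
  rw [Sparam]
  simp only [mul_div_assoc, ite_mul_conj_mul, ← Finset.mul_sum, sum_singleCombo_mul,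
    sum_conj_singleCombo_mul, quadChar_inv, ne_eq, not_true_eq_false, and_false, if_false]
  rw [Fintype.sum_eq_single (quadChar p), Fintype.sum_eq_single (quadChar p),
    Fintype.sum_eq_single (quadChar p)]
  · simp only [singleCombo_apply_self, quadChar_inv, map_one, mul_one, norm_one]
    norm_num
  all_goals intro χ h; simp [singleCombo_apply_of_ne h]

lemma Sparam_singleCombo_quadChar_right (c : MChar p → ℂ) (hc : c (quadChar p) = 0) :
    Sparam p c (singleCombo (quadChar p)) = 0 := by
  have hcond : ∀ φ ψ : MChar p, ¬(φ * quadChar p = ψ * quadChar p ∧ φ ≠ (quadChar p)⁻¹ ∧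
      φ ≠ ψ ∧ φ ≠ quadChar p) := fun φ ψ h => h.2.2.1 (mul_right_cancel h.1)
  rw [Sparam]
  simp only [mul_div_assoc, ite_mul_conj_mul, ← Finset.mul_sum, sum_singleCombo_mul,
    sum_conj_singleCombo_mul, hcond, if_false, mul_zero, Finset.sum_const_zero, hc, zero_mul]
  rw [Finset.sum_eq_zero, Finset.sum_eq_zero, Finset.sum_eq_zero]
  · simp
  all_goals
    intro φ _
    rcases eq_or_ne φ (quadChar p) with rfl | h
    · simp [hc, quadChar_inv]
    · have h' : φ⁻¹ ≠ quadChar p := by rwa [ne_eq, inv_eq_iff_eq_inv, quadChar_inv]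
      simp [singleCombo_apply_of_ne h, singleCombo_apply_of_ne h']

lemma Uparam_pairCombo (hθ : θ⁻¹ ≠ θ) (a b c d : ℂ) :
    Uparam p (pairCombo θ a b) (pairCombo θ c d) = ‖a * conj c + b * conj d‖ ^ 2 := by
  rw [Uparam, sum_pairCombo_mul hθ, pairCombo_apply_self, pairCombo_apply_inv hθ]

lemma Vparam_pairCombo (hθ : θ⁻¹ ≠ θ) (a b c d : ℂ) :
    Vparam p (pairCombo θ a b) (pairCombo θ c d) = ‖a * d + b * c‖ ^ 2 := by
  simp only [Vparam, mul_assoc]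
  rw [sum_pairCombo_mul hθ, inv_inv, pairCombo_apply_self, pairCombo_apply_inv hθ,
    inv_apply_neg_one, ← mul_assoc, ← mul_assoc, ← add_mul, norm_mul, norm_apply_neg_one, mul_one]

lemma Wparam_pairCombo (hθ : θ⁻¹ ≠ θ) (a b : ℂ) : Wparam p (pairCombo θ a b) = ‖a‖ + ‖b‖ := by
  rw [Wparam, Fintype.sum_eq_add θ θ⁻¹ hθ.symm fun χ h => by
      rw [pairCombo_apply_of_ne h.1 h.2, norm_zero],
    pairCombo_apply_self, pairCombo_apply_inv hθ]

lemma Uparam_singleCombo_right (c : MChar p → ℂ) (η : MChar p) :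
    Uparam p c (singleCombo η) = ‖c η‖ ^ 2 := by
  simp only [Uparam, mul_comm (c _), sum_conj_singleCombo_mul]

lemma Vparam_singleCombo_right (c : MChar p → ℂ) (η : MChar p) :
    Vparam p c (singleCombo η) = ‖c η⁻¹‖ ^ 2 := by
  rw [Vparam, Fintype.sum_eq_single η⁻¹ fun φ h => by
      rw [singleCombo_apply_of_ne (by rwa [ne_eq, inv_eq_iff_eq_inv]), mul_zero,
        zero_mul],
    inv_inv, singleCombo_apply_self, mul_one, norm_mul, norm_apply_neg_one, mul_one]

lemma Wparam_singleCombo (η : MChar p) : Wparam p (singleCombo η) = 1 := by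
  rw [Wparam, Fintype.sum_eq_single η fun χ h => by rw [singleCombo_apply_of_ne h, norm_zero],
    singleCombo_apply_self, norm_one]

end Combinations

lemma norm_one_add_I : ‖1 + Complex.I‖ = √2 := by
  simp [Complex.norm_def, Complex.normSq_apply, one_add_one_eq_two]

lemma norm_one_sub_I : ‖1 - Complex.I‖ = √2 := by
  simp [Complex.norm_def, Complex.normSq_apply, one_add_one_eq_two]

/-- The parameter values for the quartic-character combinations `f`, `g` and the
quadratic-character combination `h` over `F_p` with `p ≡ 1 (mod 4)`, where `θ` is the
quartic character with `θ(α) = i` for a primitive element `α`. -/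
theorem quartic_parameter_values
    (p : ℕ) [Fact p.Prime] (hp4 : p % 4 = 1)
    (α : (ZMod p)ˣ) (hα : IsPrimitive p α)
    (θ : MChar p) (hθ : θ ((α : (ZMod p)ˣ) : ZMod p) = Complex.I)
    (cf cg ch : MChar p → ℂ)
    (hcf : cf = fun χ =>
      if χ = θ then (1 - Complex.I) / 2 else if χ = θ⁻¹ then (1 + Complex.I) / 2 else 0)
    (hcg : cg = fun χ =>
      if χ = θ then (1 + Complex.I) / 2 else if χ = θ⁻¹ then (1 - Complex.I) / 2 else 0)
    (hch : ch = fun χ => if χ = θ ^ 2 then 1 else 0) :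
    Sparam p cf cf = (((-3 - (gauss p θ ^ 4 / (p : ℂ) ^ 2).re) / 2 : ℝ) : ℂ) ∧
    Sparam p cg cg = (((-3 - (gauss p θ ^ 4 / (p : ℂ) ^ 2).re) / 2 : ℝ) : ℂ) ∧
    Sparam p ch ch = -2 ∧
    Sparam p cf cg = (((-1 + (gauss p θ ^ 4 / (p : ℂ) ^ 2).re) / 2 : ℝ) : ℂ) ∧
    Sparam p cf ch = 0 ∧
    Sparam p cg ch = 0 ∧
    Uparam p cf cf = 1 ∧
    Uparam p cg cg = 1 ∧
    Uparam p ch ch = 1 ∧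
    Vparam p cf cf = 1 ∧
    Vparam p cg cg = 1 ∧
    Vparam p ch ch = 1 ∧
    Uparam p cf cg = 0 ∧
    Vparam p cf cg = 0 ∧
    Uparam p cf ch = 0 ∧
    Uparam p cg ch = 0 ∧
    Vparam p cf ch = 0 ∧
    Vparam p cg ch = 0 ∧
    Wparam p cf = Real.sqrt 2 ∧
    Wparam p cg = Real.sqrt 2 ∧
    Wparam p ch = 1 := by
  have hp : p ≠ 2 := by omega
  have hθ2 := sq_eq_quadChar_of_apply_eq_I hp hα hθ
  have hθinv := inv_ne_self_of_sq_eq_quadChar hp hθ2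
  have hη := pairCombo_apply_of_ne (quadChar_ne_of_sq_eq_quadChar hp hθ2)
    (quadChar_ne_inv_of_sq_eq_quadChar hp hθ2)
  rw [hθ2] at hch
  obtain rfl : cf = pairCombo θ ((1 - Complex.I) / 2) ((1 + Complex.I) / 2) := hcf
  obtain rfl : cg = pairCombo θ ((1 + Complex.I) / 2) ((1 - Complex.I) / 2) := hcg
  obtain rfl : ch = singleCombo (quadChar p) := hch
  simp only [Sparam_pairCombo hp hθ2, Sparam_singleCombo_quadChar,
    Sparam_singleCombo_quadChar_right _ (hη _ _), Uparam_pairCombo hθinv, Vparam_pairCombo hθinv,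
    Wparam_pairCombo hθinv, Uparam_singleCombo_right, Vparam_singleCombo_right,
    Wparam_singleCombo, quadChar_inv, hη, singleCombo_apply_self, Complex.ofReal_inj,
    Complex.sq_norm, map_mul, map_div₀, map_sub, map_add, map_one, map_ofNat, Complex.conj_I]
  refine ⟨?_, ?_, ?_, ?_, ?_, ?_, ?_, ?_, ?_, ?_, ?_, ?_, ?_, ?_, ?_, ?_, ?_, ?_, ?_, ?_, ?_⟩ <;>
    norm_num [norm_one_sub_I, norm_one_add_I, Complex.normSq_apply, Complex.mul_re, Complex.mul_im,
      Complex.div_ofNat_re, Complex.div_ofNat_im] <;>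
    ring

end Paper
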